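/- Let k ≥ 4 and r₂, r₃, …, r_k ≥ 1, and let H be the join of the complete graph K₂ with the disjoint union of the empty graph on r₂ vertices and the complete graphs K_{r₃}, …, K_{r_k}. Then the eccentricity matrix ε(H) has exactly one positive eigenvalue. -/

import Mathlib

open Finset Polynomial

noncomputable def ecc {V : Type*} [Fintype V] (G : SimpleGraph V) (u : V) : ℕ :=
  Finset.univ.sup (G.dist u)

noncomputable def eccMatrix {V : Type*} [Fintype V] (G : SimpleGraph V) :
    Matrix V V ℝ := fun u v =>
  if G.dist u v = min (ecc G u) (ecc G v) then (G.dist u v : ℝ) else 0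

theorem eccMatrix_isHermitian {V : Type*} [Fintype V] (G : SimpleGraph V) :
    (eccMatrix G).IsHermitian := by
  unfold Matrix.IsHermitian
  ext u v
  simp only [Matrix.conjTranspose_apply, eccMatrix, star_trivial]
  rw [SimpleGraph.dist_comm, min_comm]

/-- Number of positive eigenvalues (with multiplicity) of a real symmetric matrix. -/
noncomputable def posEigCount {V : Type*} [Fintype V] [DecidableEq V]
    {A : Matrix V V ℝ} (hA : A.IsHermitian) : ℕ :=
  (Finset.univ.filter fun i => 0 < hA.eigenvalues i).card

/-- The join of two simple graphs: disjoint union plus all edges in between. -/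
def graphJoin {α β : Type*} (G : SimpleGraph α) (H : SimpleGraph β) :
    SimpleGraph (α ⊕ β) where
  Adj x y := match x, y with
    | Sum.inl a, Sum.inl b => G.Adj a b
    | Sum.inr a, Sum.inr b => H.Adj a b
    | _, _ => True
  symm := ⟨by rintro (a|a) (b|b) h <;> first | exact G.adj_symm h | exact H.adj_symm h | trivial⟩
  loopless := ⟨by rintro (a|a) h <;> first | exact G.irrefl h | exact H.irrefl h⟩

/-- The disjoint union of two simple graphs. -/
def graphSum {α β : Type*} (G : SimpleGraph α) (H : SimpleGraph β) :
    SimpleGraph (α ⊕ β) where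
  Adj x y := match x, y with
    | Sum.inl a, Sum.inl b => G.Adj a b
    | Sum.inr a, Sum.inr b => H.Adj a b
    | _, _ => False
  symm := ⟨by rintro (a|a) (b|b) h <;> first | exact G.adj_symm h | exact H.adj_symm h | trivial⟩
  loopless := ⟨by rintro (a|a) h <;> first | exact G.irrefl h | exact H.irrefl h⟩

/-- Disjoint union of blocks indexed by `ι`; block `i` has `r i` vertices and is a
clique when `P i` holds and a coclique (independent set) otherwise. -/
def blocksGraph {ι : Type*} (r : ι → ℕ) (P : ι → Prop) :
    SimpleGraph (Σ i, Fin (r i)) where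
  Adj x y := x ≠ y ∧ x.1 = y.1 ∧ P x.1
  symm := ⟨by rintro x y ⟨h1, h2, h3⟩; exact ⟨h1.symm, h2.symm, h2 ▸ h3⟩⟩
  loopless := ⟨fun x h => h.1 rfl⟩

/-!
Write `w = (1, 1, 2, …, 2)`, the first two coordinates being the vertices of `K₂`. The
eccentricity matrix splits as `ε = ½ w wᵀ - N`, where `N` is `½ (e₁ - e₂)(e₁ - e₂)ᵀ` on `K₂`
and `2 (I + A)` on the blocks; since the blocks form a disjoint union of cliques (a coclique
being a union of one-vertex cliques), `I + A` is the Gram matrix of the clique indicators, so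
`N` is positive semidefinite. Hence the quadratic form of `ε` is nonpositive on the hyperplane
`w⊥`, which leaves room for at most one positive eigenvalue; and `ε` has one because it is
nonzero with zero trace.
-/

open Matrix

namespace Matrix.IsHermitian

variable {n : Type*} [Fintype n] [DecidableEq n] {A : Matrix n n ℝ}

theorem exists_eigenvalues_pos_of_trace_eq_zero (hA : A.IsHermitian) (htr : A.trace = 0)
    (hA0 : A ≠ 0) : ∃ i, 0 < hA.eigenvalues i := by
  by_contra! hnonpos
  have hsum : ∑ i, hA.eigenvalues i = 0 := by simpa [htr] using hA.trace_eq_sum_eigenvalues.symm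
  have hzero : hA.eigenvalues = 0 :=
    funext fun i => (Finset.sum_eq_zero_iff_of_nonpos fun i _ => hnonpos i).mp hsum i (mem_univ i)
  exact hA0 (hA.eigenvalues_eq_zero_iff.mp hzero)

theorem dotProduct_eigenvectorBasis (hA : A.IsHermitian) (i j : n) :
    (hA.eigenvectorBasis i : n → ℝ) ⬝ᵥ (hA.eigenvectorBasis j : n → ℝ) =
      if i = j then 1 else 0 := by
  simpa [PiLp.inner_apply, dotProduct, mul_comm] using
    orthonormal_iff_ite.mp hA.eigenvectorBasis.orthonormal i j

theorem dotProduct_mulVec_smul_add_smul_eigenvectorBasis (hA : A.IsHermitian) {i j : n}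
    (hij : i ≠ j) (a b : ℝ) :
    (a • (hA.eigenvectorBasis i : n → ℝ) + b • (hA.eigenvectorBasis j : n → ℝ)) ⬝ᵥ
      A *ᵥ (a • (hA.eigenvectorBasis i : n → ℝ) + b • (hA.eigenvectorBasis j : n → ℝ)) =
      hA.eigenvalues i * a ^ 2 + hA.eigenvalues j * b ^ 2 := by
  simp only [mulVec_add, mulVec_smul, hA.mulVec_eigenvectorBasis, dotProduct_add, add_dotProduct,
    smul_dotProduct, dotProduct_smul, smul_eq_mul, hA.dotProduct_eigenvectorBasis, if_true,
    if_neg hij, if_neg hij.symm]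
  ring

theorem card_eigenvalues_pos_le_one (hA : A.IsHermitian) (w : n → ℝ)
    (hw : ∀ x, w ⬝ᵥ x = 0 → x ⬝ᵥ A *ᵥ x ≤ 0) :
    #{i | 0 < hA.eigenvalues i} ≤ 1 := by
  by_contra! h
  obtain ⟨i, hi, j, hj, hij⟩ := one_lt_card.mp h
  simp only [mem_filter, mem_univ, true_and] at hi hj
  have hq := hA.dotProduct_mulVec_smul_add_smul_eigenvectorBasis hij
  set vi := (hA.eigenvectorBasis i : n → ℝ)
  set vj := (hA.eigenvectorBasis j : n → ℝ)
  by_cases h0 : w ⬝ᵥ vi = 0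
  · have := hw ((1 : ℝ) • vi + (0 : ℝ) • vj) (by simp [h0])
    rw [hq] at this
    nlinarith
  · have := hw ((w ⬝ᵥ vj) • vi + (-(w ⬝ᵥ vi)) • vj)
      (by simp only [dotProduct_add, dotProduct_smul, smul_eq_mul]; ring)
    rw [hq] at this
    have : 0 < (w ⬝ᵥ vi) ^ 2 := by positivity
    nlinarith [sq_nonneg (w ⬝ᵥ vj)]

theorem card_eigenvalues_pos_le_one_of_eq_sub (hA : A.IsHermitian) {c : ℝ} {w : n → ℝ}
    {N : Matrix n n ℝ} (hN : N.PosSemidef) (hAN : A = c • vecMulVec w w - N) :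
    #{i | 0 < hA.eigenvalues i} ≤ 1 :=
  hA.card_eigenvalues_pos_le_one w fun x hx => by
    have := hN.dotProduct_mulVec_nonneg x
    simp only [star_trivial] at this
    simp [hAN, sub_mulVec, smul_mulVec, vecMulVec_mulVec, hx, this]

end Matrix.IsHermitian

namespace Matrix

variable {R : Type*} [CommRing R] [PartialOrder R] [StarRing R] [StarOrderedRing R]

theorem posSemidef_ite_apply_eq_apply {V P : Type*} [Fintype V] [Fintype P] [DecidableEq P]
    (f : V → P) : (of fun u v => if f u = f v then (1 : R) else 0).PosSemidef := by
  let M : Matrix P V R := of fun p v => if f v = p then 1 else 0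
  have hM : (of fun u v => if f u = f v then (1 : R) else 0) = Mᴴ * M := by
    ext u v
    simp [M, mul_apply, apply_ite star, eq_comm]
  exact hM ▸ posSemidef_conjTranspose_mul_self M

theorem PosSemidef.fromBlocks_zero {m n : Type*} [Fintype m] [Fintype n] {A : Matrix m m R}
    {D : Matrix n n R} (hA : A.PosSemidef) (hD : D.PosSemidef) :
    (fromBlocks A 0 0 D).PosSemidef := by
  refine posSemidef_iff_dotProduct_mulVec.mpr
    ⟨hA.isHermitian.fromBlocks (by simp) hD.isHermitian, fun x => ?_⟩
  obtain ⟨a, b, rfl⟩ : ∃ a b, x = Sum.elim a b := ⟨_, _, (Sum.elim_comp_inl_inr x).symm⟩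
  simpa [fromBlocks_mulVec, Function.star_sumElim, sumElim_dotProduct_sumElim] using
    add_nonneg (hA.dotProduct_mulVec_nonneg a) (hD.dotProduct_mulVec_nonneg b)

end Matrix

namespace SimpleGraph

variable {V : Type*} {G : SimpleGraph V} {u v w : V}

theorem dist_eq_two_of_adj_of_adj (hne : u ≠ v) (hnadj : ¬G.Adj u v) (huw : G.Adj u w)
    (hwv : G.Adj w v) : G.dist u v = 2 := by
  have hw : w ∈ G.commonNeighbors u v := (mem_commonNeighbors G).mpr ⟨huw, hwv.symm⟩
  simp [dist, edist_eq_two_iff.mpr ⟨hne, hnadj, w, hw⟩]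

end SimpleGraph

section GraphJoin

variable {α β : Type*} {G : SimpleGraph α} {H : SimpleGraph β}

theorem graphJoin_dist_eq_two [Nonempty α] [Nonempty β] {x y : α ⊕ β} (hne : x ≠ y)
    (hnadj : ¬(graphJoin G H).Adj x y) : (graphJoin G H).dist x y = 2 := by
  obtain ⟨a⟩ := ‹Nonempty α›
  obtain ⟨b⟩ := ‹Nonempty β›
  rcases x with x | x <;> rcases y with y | y
  · exact SimpleGraph.dist_eq_two_of_adj_of_adj hne hnadj (w := .inr b) trivial trivial
  · exact absurd trivial hnadj
  · exact absurd trivial hnadj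
  · exact SimpleGraph.dist_eq_two_of_adj_of_adj hne hnadj (w := .inl a) trivial trivial

theorem graphJoin_dist_le_two [Nonempty α] [Nonempty β] (x y : α ⊕ β) :
    (graphJoin G H).dist x y ≤ 2 := by
  by_cases hne : x = y
  · simp [hne]
  by_cases hadj : (graphJoin G H).Adj x y
  · simp [SimpleGraph.dist_eq_one_iff_adj.mpr hadj]
  · exact (graphJoin_dist_eq_two hne hadj).le

end GraphJoin

section Ecc

variable {V : Type*} [Fintype V] (G : SimpleGraph V)

theorem dist_le_ecc (u v : V) : G.dist u v ≤ ecc G u :=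
  Finset.le_sup (mem_univ v)

theorem ecc_eq_of_forall_dist_le {u : V} {n : ℕ} (h : ∀ v, G.dist u v ≤ n) (v : V)
    (hv : G.dist u v = n) : ecc G u = n :=
  le_antisymm (Finset.sup_le fun v _ => h v) (hv ▸ dist_le_ecc G u v)

theorem eccMatrix_apply_self (u : V) : eccMatrix G u u = 0 := by
  simp [eccMatrix]

theorem trace_eccMatrix : (eccMatrix G).trace = 0 := by
  simp [trace, eccMatrix_apply_self]

variable {G} {u v : V} {n : ℕ}

theorem eccMatrix_apply_of_dist_eq (h : G.dist u v = n) (hmin : min (ecc G u) (ecc G v) = n) :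
    eccMatrix G u v = n := by
  simp [eccMatrix, h, hmin]

theorem eccMatrix_apply_of_dist_ne (h : G.dist u v ≠ min (ecc G u) (ecc G v)) :
    eccMatrix G u v = 0 :=
  if_neg h

end Ecc

section MixedStar

open SimpleGraph

variable {ι : Type*} {r : ι → ℕ} {P : ι → Prop}

abbrev mixedStarExtension (r : ι → ℕ) (P : ι → Prop) : SimpleGraph (Fin 2 ⊕ Σ i, Fin (r i)) :=
  graphJoin ⊤ (blocksGraph r P)

def blockClass (P : ι → Prop) [DecidablePred P] (x : Σ i, Fin (r i)) : (Σ i, Fin (r i)) ⊕ ι :=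
  if P x.1 then .inr x.1 else .inl x

theorem blockClass_eq_blockClass_iff [DecidablePred P] {x y : Σ i, Fin (r i)} :
    blockClass P x = blockClass P y ↔ x = y ∨ (blocksGraph r P).Adj x y := by
  by_cases hx : P x.1 <;> by_cases hy : P y.1 <;>
    simp only [blockClass, blocksGraph, hx, hy] <;> grind

variable [Fintype ι]

theorem ecc_mixedStarExtension_inl (a : Fin 2) : ecc (mixedStarExtension r P) (.inl a) = 1 := by
  obtain ⟨b, hb⟩ := exists_ne a
  refine ecc_eq_of_forall_dist_le _ (fun v => ?_) (.inl b) (dist_eq_one_iff_adj.mpr hb.symm)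
  by_cases hv : .inl a = v
  · simp [hv]
  · rcases v with b | y
    · exact (dist_eq_one_iff_adj.mpr fun h => hv (congrArg _ h)).le
    · exact (dist_eq_one_iff_adj.mpr trivial).le

theorem ecc_mixedStarExtension_inr [Nontrivial ι] (hr : ∀ i, 0 < r i) (x : Σ i, Fin (r i)) :
    ecc (mixedStarExtension r P) (.inr x) = 2 := by
  obtain ⟨j, hj⟩ := exists_ne x.1
  have : Nonempty (Σ i, Fin (r i)) := ⟨x⟩
  refine ecc_eq_of_forall_dist_le _ (graphJoin_dist_le_two _) (.inr ⟨j, ⟨0, hr j⟩⟩)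
    (graphJoin_dist_eq_two ?_ ?_)
  · rintro ⟨⟩
    exact hj rfl
  · exact fun h => hj h.2.1.symm

theorem eccMatrix_mixedStarExtension_inl_inl (a b : Fin 2) :
    eccMatrix (mixedStarExtension r P) (.inl a) (.inl b) = if a = b then 0 else 1 := by
  split_ifs with hab
  · exact hab ▸ eccMatrix_apply_self _ _
  · exact_mod_cast eccMatrix_apply_of_dist_eq (dist_eq_one_iff_adj.mpr hab)
      (by simp [ecc_mixedStarExtension_inl])

theorem eccMatrix_mixedStarExtension_inl_inr [Nontrivial ι] (hr : ∀ i, 0 < r i) (a : Fin 2)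
    (y : Σ i, Fin (r i)) : eccMatrix (mixedStarExtension r P) (.inl a) (.inr y) = 1 := by
  exact_mod_cast eccMatrix_apply_of_dist_eq (dist_eq_one_iff_adj.mpr trivial)
    (by simp [ecc_mixedStarExtension_inl, ecc_mixedStarExtension_inr hr])

theorem eccMatrix_mixedStarExtension_inr_inl [Nontrivial ι] (hr : ∀ i, 0 < r i)
    (x : Σ i, Fin (r i)) (b : Fin 2) :
    eccMatrix (mixedStarExtension r P) (.inr x) (.inl b) = 1 := by
  exact_mod_cast eccMatrix_apply_of_dist_eq (dist_eq_one_iff_adj.mpr trivial)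
    (by simp [ecc_mixedStarExtension_inl, ecc_mixedStarExtension_inr hr])

open Classical in
theorem eccMatrix_mixedStarExtension_inr_inr [Nontrivial ι] (hr : ∀ i, 0 < r i)
    (x y : Σ i, Fin (r i)) : eccMatrix (mixedStarExtension r P) (.inr x) (.inr y) =
      if x = y ∨ (blocksGraph r P).Adj x y then 0 else 2 := by
  have hmin :
      min (ecc (mixedStarExtension r P) (.inr x)) (ecc (mixedStarExtension r P) (.inr y)) = 2 := by
    simp [ecc_mixedStarExtension_inr hr]
  split_ifs with h
  · rcases h with rfl | hadj
    · exact eccMatrix_apply_self _ _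
    · have hdist : (mixedStarExtension r P).dist (.inr x) (.inr y) = 1 :=
        dist_eq_one_iff_adj.mpr hadj
      exact eccMatrix_apply_of_dist_ne (by rw [hdist, hmin]; decide)
  · obtain ⟨hne, hnadj⟩ := not_or.mp h
    have : Nonempty (Σ i, Fin (r i)) := ⟨x⟩
    have hdist : (mixedStarExtension r P).dist (.inr x) (.inr y) = 2 :=
      graphJoin_dist_eq_two (Sum.inr_injective.ne hne) hnadj
    exact_mod_cast eccMatrix_apply_of_dist_eq hdist hmin

variable [DecidableEq ι]

variable (r P) in
noncomputable def mixedStarRemainder [DecidablePred P] :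
    Matrix (Fin 2 ⊕ Σ i, Fin (r i)) (Fin 2 ⊕ Σ i, Fin (r i)) ℝ :=
  fromBlocks ((1 / 2 : ℝ) • vecMulVec ![1, -1] ![1, -1]) 0 0
    ((2 : ℝ) • of fun x y => if blockClass P x = blockClass P y then 1 else 0)

theorem posSemidef_mixedStarRemainder [DecidablePred P] : (mixedStarRemainder r P).PosSemidef :=
  .fromBlocks_zero ((posSemidef_vecMulVec_self_star _).smul (by norm_num))
    ((posSemidef_ite_apply_eq_apply _).smul (by norm_num))

theorem eccMatrix_mixedStarExtension [DecidablePred P] [Nontrivial ι] (hr : ∀ i, 0 < r i) :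
    eccMatrix (mixedStarExtension r P) =
      (1 / 2 : ℝ) • vecMulVec (Sum.elim 1 2) (Sum.elim 1 2) - mixedStarRemainder r P := by
  ext (a | x) (b | y)
  · rw [eccMatrix_mixedStarExtension_inl_inl]
    fin_cases a <;> fin_cases b <;> simp [mixedStarRemainder, vecMulVec_apply] <;> norm_num
  · simp [eccMatrix_mixedStarExtension_inl_inr hr, mixedStarRemainder, vecMulVec_apply]
  · simp [eccMatrix_mixedStarExtension_inr_inl hr, mixedStarRemainder, vecMulVec_apply]
  · rw [eccMatrix_mixedStarExtension_inr_inr hr]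
    simp [mixedStarRemainder, vecMulVec_apply, ← blockClass_eq_blockClass_iff]
    split_ifs <;> norm_num

theorem posEigCount_eccMatrix_mixedStarExtension [Nontrivial ι] (hr : ∀ i, 0 < r i) :
    posEigCount (eccMatrix_isHermitian (mixedStarExtension r P)) = 1 := by
  classical
  have hne : eccMatrix (mixedStarExtension r P) ≠ 0 := fun h => by
    simpa [h] using eccMatrix_mixedStarExtension_inl_inl (r := r) (P := P) 0 1
  apply le_antisymm
  · exact (eccMatrix_isHermitian _).card_eigenvalues_pos_le_one_of_eq_sub
      posSemidef_mixedStarRemainder (eccMatrix_mixedStarExtension hr)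
  · obtain ⟨i, hi⟩ := (eccMatrix_isHermitian _).exists_eigenvalues_pos_of_trace_eq_zero
      (trace_eccMatrix _) hne
    exact one_le_card.mpr ⟨i, by simpa using hi⟩

end MixedStar

/-- for `k ≥ 4`, the join of `K₂` with the disjoint union of a coclique of
size `r 0` and cliques of sizes `r 1, …, r (k-2)` (a mixed extension of `S_k` of type
`(2, -r₂, r₃, …, r_k)`) has exactly one positive eccentricity eigenvalue. -/
theorem stmt17 (k : ℕ) (hk : 4 ≤ k) (r : Fin (k - 1) → ℕ) (hr : ∀ i, 1 ≤ r i) :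
    posEigCount (eccMatrix_isHermitian (graphJoin (⊤ : SimpleGraph (Fin 2))
      (blocksGraph r (fun i => (i : ℕ) ≠ 0)))) = 1 := by
  have : Nontrivial (Fin (k - 1)) := Fin.nontrivial_iff_two_le.mpr (by omega)
  exact posEigCount_eccMatrix_mixedStarExtension hr
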